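/- arXiv:2411.01207 — 4 statements merged into one kernel-verified Lean document; each statement's English description precedes it below -/
import Mathlib

section
/- Let G be a finite simple graph with n vertices and m edges. Then ρ(G) − 2m/n ≤ √(s(G)/2), where ρ(G) is the spectral radius of G and s(G) is the degree deviation of G. -/
open Finset Matrix

/-- The adjacency matrix of a simple graph over `ℝ` is Hermitian. -/
lemma SimpleGraph.isHermitian_adjMatrix' {V : Type*} [Fintype V] (G : SimpleGraph V)
    [DecidableRel G.Adj] : (G.adjMatrix ℝ).IsHermitian := by
  rw [Matrix.IsHermitian, Matrix.conjTranspose_eq_transpose_of_trivial]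
  exact G.isSymm_adjMatrix

/-- The spectral radius of a simple graph: the largest eigenvalue of its adjacency matrix. -/
noncomputable def SimpleGraph.spectralRadius {V : Type*} [Fintype V] [DecidableEq V]
    (G : SimpleGraph V) [DecidableRel G.Adj] : ℝ :=
  ⨆ i, (G.isHermitian_adjMatrix').eigenvalues i

/-- The degree deviation of a simple graph: `s(G) = ∑_v |d(v) - 2m/n|`. -/
noncomputable def SimpleGraph.degreeDeviation {V : Type*} [Fintype V] [DecidableEq V]
    (G : SimpleGraph V) [DecidableRel G.Adj] : ℝ :=
  ∑ v, |(G.degree v : ℝ) - 2 * (G.edgeFinset.card : ℝ) / (Fintype.card V : ℝ)|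

/-!
Let `z ≥ 0` be a Perron eigenvector of `A(G)` for `ρ` and `z w` its largest coordinate. Reading
the eigen-equation at `w` gives `ρ z_w = ∑_{v ∼ w} z_v ≤ ∑_v z_v`. Summing it over all vertices
gives `(ρ - d̄) ∑_v z_v = ∑_v (d_v - d̄) z_v ≤ z_w ∑_v (d_v - d̄)⁺ = z_w s/2`, because the
deviations `d_v - d̄` sum to zero. Hence, when `ρ ≥ d̄ ≥ 0`,
`(ρ - d̄)² z_w ≤ (ρ - d̄) ρ z_w ≤ (ρ - d̄) ∑_v z_v ≤ z_w s/2`.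
-/

namespace Matrix

variable {n : Type*} [Fintype n]

open scoped MatrixOrder ComplexOrder in
lemma IsHermitian.posSemidef_smul_one_sub [DecidableEq n] {𝕜 : Type*} [RCLike 𝕜]
    {A : Matrix n n 𝕜} (hA : A.IsHermitian) {μ : ℝ} (h : ∀ i, hA.eigenvalues i ≤ μ) :
    (μ • 1 - A).PosSemidef := by
  have : A ≤ algebraMap ℝ _ μ := by
    rw [le_algebraMap_iff_spectrum_le hA.isSelfAdjoint, hA.spectrum_real_eq_range_eigenvalues]
    rintro _ ⟨i, rfl⟩
    exact h i
  simpa [Matrix.le_iff, Algebra.algebraMap_eq_smul_one] using this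

lemma IsHermitian.mulVec_eq_smul_of_le_dotProduct_mulVec [DecidableEq n] {A : Matrix n n ℝ}
    (hA : A.IsHermitian) {μ : ℝ} (h : ∀ i, hA.eigenvalues i ≤ μ) {x : n → ℝ}
    (hx : μ * (x ⬝ᵥ x) ≤ x ⬝ᵥ A *ᵥ x) : A *ᵥ x = μ • x := by
  have hpsd := hA.posSemidef_smul_one_sub h
  have hzero : star x ⬝ᵥ (μ • 1 - A) *ᵥ x = 0 := by
    refine le_antisymm ?_ (hpsd.dotProduct_mulVec_nonneg x)
    simp only [star_trivial, sub_mulVec, smul_mulVec, one_mulVec, dotProduct_sub,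
      dotProduct_smul, smul_eq_mul]
    linarith
  rw [hpsd.dotProduct_mulVec_zero_iff, sub_mulVec, smul_mulVec, one_mulVec, sub_eq_zero] at hzero
  exact hzero.symm

lemma dotProduct_mulVec_le_abs {A : Matrix n n ℝ} (hA : ∀ i j, 0 ≤ A i j) (x : n → ℝ) :
    x ⬝ᵥ A *ᵥ x ≤ |x| ⬝ᵥ A *ᵥ |x| := by
  simp only [dotProduct, mulVec, Finset.mul_sum, Pi.abs_apply]
  refine Finset.sum_le_sum fun i _ => Finset.sum_le_sum fun j _ => ?_
  calc x i * (A i j * x j) ≤ |x i * (A i j * x j)| := le_abs_self _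
    _ = |x i| * (A i j * |x j|) := by rw [abs_mul, abs_mul, abs_of_nonneg (hA i j)]

/-- `|x|` has at least the Rayleigh quotient of a top eigenvector `x`, so it is one too. -/
lemma IsHermitian.exists_nonneg_mulVec_eq_iSup_eigenvalues_smul [DecidableEq n] [Nonempty n]
    {A : Matrix n n ℝ} (hA : A.IsHermitian) (hA₀ : ∀ i j, 0 ≤ A i j) :
    ∃ z : n → ℝ, 0 ≤ z ∧ z ≠ 0 ∧ A *ᵥ z = (⨆ i, hA.eigenvalues i) • z := by
  obtain ⟨i₀, hi₀⟩ := Finite.exists_max hA.eigenvalues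
  have hsup : (⨆ i, hA.eigenvalues i) = hA.eigenvalues i₀ :=
    le_antisymm (ciSup_le hi₀) (le_ciSup (Finite.bddAbove_range _) i₀)
  set x := (hA.eigenvectorBasis i₀).ofLp
  have hx : x ≠ 0 := by simpa [x] using hA.eigenvectorBasis.orthonormal.ne_zero i₀
  have hAx : A *ᵥ x = hA.eigenvalues i₀ • x := hA.mulVec_eigenvectorBasis i₀
  have habs : |x| ⬝ᵥ |x| = x ⬝ᵥ x := by simp [dotProduct, ← sq]
  refine ⟨|x|, abs_nonneg x, by simpa using hx, ?_⟩
  rw [hsup]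
  refine hA.mulVec_eq_smul_of_le_dotProduct_mulVec hi₀ ?_
  calc hA.eigenvalues i₀ * (|x| ⬝ᵥ |x|) = x ⬝ᵥ A *ᵥ x := by
        rw [hAx, dotProduct_smul, smul_eq_mul, habs]
    _ ≤ |x| ⬝ᵥ A *ᵥ |x| := dotProduct_mulVec_le_abs hA₀ x

end Matrix

lemma sum_posPart_eq_half_sum_abs_of_sum_eq_zero {ι R : Type*} [Field R] [LinearOrder R]
    [IsStrictOrderedRing R] (s : Finset ι) {f : ι → R} (hf : ∑ i ∈ s, f i = 0) :
    ∑ i ∈ s, (f i)⁺ = (∑ i ∈ s, |f i|) / 2 := by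
  have hsub : ∑ i ∈ s, (f i)⁺ - ∑ i ∈ s, (f i)⁻ = 0 := by
    rw [← Finset.sum_sub_distrib, ← hf]
    simp only [posPart_sub_negPart]
  simp only [← posPart_add_negPart, Finset.sum_add_distrib]
  linarith

lemma sum_mul_le_sum_posPart_mul {ι R : Type*} [Ring R] [LinearOrder R] [IsOrderedRing R]
    (s : Finset ι) (f z : ι → R) {M : R} (hz₀ : ∀ i ∈ s, 0 ≤ z i) (hzM : ∀ i ∈ s, z i ≤ M) :
    ∑ i ∈ s, f i * z i ≤ (∑ i ∈ s, (f i)⁺) * M := by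
  rw [Finset.sum_mul]
  refine Finset.sum_le_sum fun i hi => ?_
  calc f i * z i ≤ (f i)⁺ * z i := mul_le_mul_of_nonneg_right (le_posPart _) (hz₀ i hi)
    _ ≤ (f i)⁺ * M := mul_le_mul_of_nonneg_left (hzM i hi) (posPart_nonneg _)

namespace SimpleGraph

variable {V : Type*} [Fintype V] (G : SimpleGraph V) [DecidableRel G.Adj]

noncomputable def averageDegree : ℝ := 2 * (G.edgeFinset.card : ℝ) / (Fintype.card V : ℝ)

lemma sum_degree_sub_averageDegree [Nonempty V] :
    ∑ v, ((G.degree v : ℝ) - G.averageDegree) = 0 := by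
  have hdeg : ∑ v, (G.degree v : ℝ) = 2 * G.edgeFinset.card := by
    exact_mod_cast G.sum_degrees_eq_twice_card_edges
  rw [Finset.sum_sub_distrib, hdeg, Finset.sum_const, Finset.card_univ, nsmul_eq_mul,
    averageDegree, mul_div_cancel₀ _ (by positivity)]
  ring

lemma sum_adjMatrix_mulVec {R : Type*} [Semiring R] (z : V → R) :
    ∑ v, (G.adjMatrix R *ᵥ z) v = ∑ v, (G.degree v : R) * z v := by
  have h := dotProduct_mulVec (fun _ => (1 : R)) (G.adjMatrix R) z
  simp only [dotProduct, one_mul] at h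
  simpa [adjMatrix_vecMul_apply] using h

lemma adjMatrix_mulVec_apply_le_sum {R : Type*} [NonAssocSemiring R] [PartialOrder R]
    [IsOrderedAddMonoid R] {z : V → R} (hz : 0 ≤ z) (v : V) :
    (G.adjMatrix R *ᵥ z) v ≤ ∑ u, z u := by
  rw [adjMatrix_mulVec_apply]
  exact Finset.sum_le_sum_of_subset_of_nonneg (Finset.subset_univ _) fun u _ _ => hz u

lemma averageDegree_nonneg : 0 ≤ G.averageDegree := by
  unfold averageDegree
  positivity

lemma exists_nonneg_mulVec_eq_spectralRadius_smul [DecidableEq V] [Nonempty V] :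
    ∃ z : V → ℝ, 0 ≤ z ∧ z ≠ 0 ∧ G.adjMatrix ℝ *ᵥ z = G.spectralRadius • z :=
  G.isHermitian_adjMatrix'.exists_nonneg_mulVec_eq_iSup_eigenvalues_smul fun i j => by
    rw [adjMatrix_apply]
    split_ifs <;> norm_num

lemma eigenvalue_sub_averageDegree_mul_sum_le [DecidableEq V] [Nonempty V] {μ M : ℝ}
    {z : V → ℝ} (hAz : G.adjMatrix ℝ *ᵥ z = μ • z) (hz : 0 ≤ z) (hzM : ∀ v, z v ≤ M) :
    (μ - G.averageDegree) * ∑ v, z v ≤ G.degreeDeviation / 2 * M := by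
  have hμ : μ * ∑ v, z v = ∑ v, (G.degree v : ℝ) * z v := by
    rw [← G.sum_adjMatrix_mulVec, hAz, Finset.mul_sum]
    rfl
  calc (μ - G.averageDegree) * ∑ v, z v
      = ∑ v, ((G.degree v : ℝ) - G.averageDegree) * z v := by
        rw [sub_mul, hμ, Finset.mul_sum, ← Finset.sum_sub_distrib]
        simp only [sub_mul]
    _ ≤ (∑ v, ((G.degree v : ℝ) - G.averageDegree)⁺) * M :=
        sum_mul_le_sum_posPart_mul _ _ _ (fun v _ => hz v) fun v _ => hzM v
    _ = G.degreeDeviation / 2 * M := by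
        rw [sum_posPart_eq_half_sum_abs_of_sum_eq_zero _ G.sum_degree_sub_averageDegree]
        rfl

end SimpleGraph

/-- For any graph `G` with `n` vertices and `m` edges,
`ρ(G) - 2m/n ≤ √(s(G)/2)`. -/
theorem spectralRadius_sub_avgDegree_le_sqrt_half_degreeDeviation
    {V : Type*} [Fintype V] [DecidableEq V] [Nonempty V]
    (G : SimpleGraph V) [DecidableRel G.Adj] :
    G.spectralRadius - 2 * (G.edgeFinset.card : ℝ) / (Fintype.card V : ℝ) ≤
      Real.sqrt (G.degreeDeviation / 2) := by
  obtain ⟨z, hz₀, hz, hAz⟩ := G.exists_nonneg_mulVec_eq_spectralRadius_smul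
  obtain ⟨w, hw⟩ := Finite.exists_max z
  have hzw : 0 < z w :=
    (hz₀ w).lt_of_ne fun h => hz (funext fun v => le_antisymm ((hw v).trans h.ge) (hz₀ v))
  have hρ : G.spectralRadius * z w ≤ ∑ v, z v := by
    simpa only [hAz, Pi.smul_apply, smul_eq_mul] using G.adjMatrix_mulVec_apply_le_sum hz₀ w
  have hdev := G.eigenvalue_sub_averageDegree_mul_sum_le hAz hz₀ hw
  change G.spectralRadius - G.averageDegree ≤ _
  rcases le_or_gt (G.spectralRadius - G.averageDegree) 0 with hle | hpos
  · exact hle.trans (Real.sqrt_nonneg _)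
  rw [Real.le_sqrt' hpos]
  refine le_of_mul_le_mul_right ?_ hzw
  calc (G.spectralRadius - G.averageDegree) ^ 2 * z w
      ≤ (G.spectralRadius - G.averageDegree) * (G.spectralRadius * z w) := by
        nlinarith [mul_nonneg (mul_nonneg hpos.le hzw.le) G.averageDegree_nonneg]
    _ ≤ (G.spectralRadius - G.averageDegree) * ∑ v, z v := by gcongr
    _ ≤ G.degreeDeviation / 2 * z w := hdev
end

section
/- Let G be a finite simple graph with spectral radius ρ and adjacency matrix A. For any polynomial f with real coefficients, f(ρ) ≤ max_{u ∈ V(G)} r_u(f(A)), where r_u(f(A)) denotes the row sum of the matrix f(A) at the row indexed by vertex u. -/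
open Finset Matrix

/-! For a symmetric matrix with nonnegative entries, the largest eigenvalue `ρ` has an eigenvector
`x ≥ 0`, `x ≠ 0` (Perron–Frobenius): if `y` is any `ρ`-eigenvector, passing to `|y|` can only
increase the quadratic form `z ⬝ A z`, which is at most `ρ ‖z‖²` because `ρ • 1 - A` is positive
semidefinite, and equality in that bound forces `A |y| = ρ |y|`. Then `f(A) x = f(ρ) x`, and since
`f(A)` is symmetric `x` is also a left eigenvector, so
`f(ρ) ∑ᵤ xᵤ = ∑ᵤ xᵤ rᵤ(f(A)) ≤ (maxᵤ rᵤ(f(A))) ∑ᵤ xᵤ`. -/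

open Polynomial

section

variable {n : Type*} [Fintype n]

theorem Matrix.mulVec_pow_of_mulVec_eq_smul {R : Type*} [CommSemiring R] [DecidableEq n]
    {A : Matrix n n R} {x : n → R} {μ : R} (h : A *ᵥ x = μ • x) (k : ℕ) :
    (A ^ k) *ᵥ x = μ ^ k • x := by
  induction k with
  | zero => simp
  | succ k ih => rw [pow_succ', ← mulVec_mulVec, ih, mulVec_smul, h, smul_smul, pow_succ]

theorem Matrix.aeval_mulVec_of_mulVec_eq_smul {R : Type*} [CommSemiring R] [DecidableEq n]
    {A : Matrix n n R} {x : n → R} {μ : R} (h : A *ᵥ x = μ • x) (p : R[X]) :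
    aeval A p *ᵥ x = p.eval μ • x := by
  induction p using Polynomial.induction_on' with
  | add p q hp hq => rw [map_add, add_mulVec, hp, hq, eval_add, add_smul]
  | monomial k a =>
    rw [aeval_monomial, Algebra.algebraMap_eq_smul_one, smul_one_mul, smul_mulVec,
      mulVec_pow_of_mulVec_eq_smul h, smul_smul, eval_monomial]

theorem Matrix.transpose_aeval {R : Type*} [CommSemiring R] [DecidableEq n]
    (A : Matrix n n R) (p : R[X]) : (aeval A p)ᵀ = aeval Aᵀ p := by
  simp [aeval_eq_sum_range, transpose_sum, transpose_pow]

open scoped MatrixOrder ComplexOrder in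
theorem Matrix.IsHermitian.posSemidef_algebraMap_iSup_eigenvalues_sub {𝕜 : Type*} [RCLike 𝕜]
    [DecidableEq n] {A : Matrix n n 𝕜} (hA : A.IsHermitian) :
    (algebraMap ℝ (Matrix n n 𝕜) (⨆ i, hA.eigenvalues i) - A).PosSemidef := by
  rw [← Matrix.le_iff]
  refine le_algebraMap_of_spectrum_le (fun x hx => ?_) hA.isSelfAdjoint
  rw [hA.spectrum_real_eq_range_eigenvalues] at hx
  obtain ⟨i, rfl⟩ := hx
  exact le_ciSup (Set.finite_range _).bddAbove i

theorem Matrix.IsHermitian.mulVec_eq_iSup_eigenvalues_smul_of_le [DecidableEq n]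
    {A : Matrix n n ℝ} (hA : A.IsHermitian) {x : n → ℝ}
    (hx : (⨆ i, hA.eigenvalues i) * (x ⬝ᵥ x) ≤ x ⬝ᵥ A *ᵥ x) :
    A *ᵥ x = (⨆ i, hA.eigenvalues i) • x := by
  set ρ := ⨆ i, hA.eigenvalues i
  have hB := hA.posSemidef_algebraMap_iSup_eigenvalues_sub
  have hBx : (algebraMap ℝ (Matrix n n ℝ) ρ - A) *ᵥ x = ρ • x - A *ᵥ x := by
    rw [sub_mulVec, Algebra.algebraMap_eq_smul_one, smul_mulVec, one_mulVec]
  have hxBx : star x ⬝ᵥ (algebraMap ℝ (Matrix n n ℝ) ρ - A) *ᵥ x = 0 := by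
    have h := hB.dotProduct_mulVec_nonneg x
    rw [star_trivial, hBx, dotProduct_sub, dotProduct_smul, smul_eq_mul] at h ⊢
    linarith
  rw [hB.dotProduct_mulVec_zero_iff, hBx, sub_eq_zero] at hxBx
  exact hxBx.symm

theorem Matrix.dotProduct_mulVec_le_dotProduct_mulVec_abs {A : Matrix n n ℝ}
    (hA : ∀ i j, 0 ≤ A i j) (x : n → ℝ) :
    x ⬝ᵥ A *ᵥ x ≤ |x| ⬝ᵥ A *ᵥ |x| := by
  simp only [dotProduct, mulVec, mul_sum]
  refine sum_le_sum fun i _ => sum_le_sum fun j _ => ?_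
  calc x i * (A i j * x j) = A i j * (x i * x j) := by ring
    _ ≤ A i j * |x i * x j| := mul_le_mul_of_nonneg_left (le_abs_self _) (hA i j)
    _ = |x| i * (A i j * |x| j) := by rw [abs_mul, Pi.abs_apply, Pi.abs_apply]; ring

theorem Matrix.IsHermitian.exists_nonneg_mulVec_eq_iSup_eigenvalues_smul_s1 [DecidableEq n]
    [Nonempty n] {A : Matrix n n ℝ} (hA : A.IsHermitian) (hA₀ : ∀ i j, 0 ≤ A i j) :
    ∃ x : n → ℝ, 0 ≤ x ∧ x ≠ 0 ∧ A *ᵥ x = (⨆ i, hA.eigenvalues i) • x := by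
  obtain ⟨i, hi⟩ := exists_eq_ciSup_of_finite (f := hA.eigenvalues)
  set y : n → ℝ := ⇑(hA.eigenvectorBasis i)
  have hy : y ≠ 0 := fun h =>
    hA.eigenvectorBasis.orthonormal.ne_zero i (by ext v; exact congrFun h v)
  refine ⟨|y|, abs_nonneg y, by simpa using hy, hA.mulVec_eq_iSup_eigenvalues_smul_of_le ?_⟩
  have hyy : |y| ⬝ᵥ |y| = y ⬝ᵥ y := by simp only [dotProduct, Pi.abs_apply, abs_mul_abs_self]
  calc (⨆ i, hA.eigenvalues i) * (|y| ⬝ᵥ |y|) = y ⬝ᵥ A *ᵥ y := by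
        rw [hA.mulVec_eigenvectorBasis, hi, dotProduct_smul, smul_eq_mul, hyy]
    _ ≤ |y| ⬝ᵥ A *ᵥ |y| := dotProduct_mulVec_le_dotProduct_mulVec_abs hA₀ y

theorem Matrix.le_sup'_rowSum_of_vecMul_eq_smul [Nonempty n] {M : Matrix n n ℝ} {x : n → ℝ}
    {c : ℝ} (hx₀ : 0 ≤ x) (hx : x ≠ 0) (h : x ᵥ* M = c • x) :
    c ≤ univ.sup' univ_nonempty (fun u => ∑ v, M u v) := by
  set R := univ.sup' univ_nonempty (fun u => ∑ v, M u v)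
  have hpos : 0 < ∑ u, x u := by
    obtain ⟨u, hu⟩ := Function.ne_iff.mp hx
    exact sum_pos' (fun v _ => hx₀ v) ⟨u, mem_univ u, lt_of_le_of_ne (hx₀ u) (Ne.symm hu)⟩
  refine le_of_mul_le_mul_right ?_ hpos
  calc c * ∑ u, x u = x ⬝ᵥ M *ᵥ 1 := by
        rw [dotProduct_mulVec, h, smul_dotProduct, dotProduct_one, smul_eq_mul]
    _ = ∑ u, x u * ∑ v, M u v := by simp [dotProduct, mulVec]
    _ ≤ ∑ u, x u * R := sum_le_sum fun u _ =>
        mul_le_mul_of_nonneg_left (le_sup' (fun u => ∑ v, M u v) (mem_univ u)) (hx₀ u)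
    _ = R * ∑ u, x u := by rw [← sum_mul, mul_comm]

end

/-- For any polynomial `f`, `f(ρ(G))` is at most the maximum row sum of `f(A(G))`. -/
theorem polynomial_eval_spectralRadius_le_max_rowSum
    {V : Type*} [Fintype V] [DecidableEq V] [Nonempty V]
    (G : SimpleGraph V) [DecidableRel G.Adj] (f : Polynomial ℝ) :
    f.eval G.spectralRadius ≤
      Finset.univ.sup' Finset.univ_nonempty
        (fun u => ∑ v, (Polynomial.aeval (G.adjMatrix ℝ) f) u v) := by
  obtain ⟨x, hx₀, hx, hAx⟩ :=
    G.isHermitian_adjMatrix'.exists_nonneg_mulVec_eq_iSup_eigenvalues_smul_s1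
      fun u v => by rw [SimpleGraph.adjMatrix_apply]; positivity
  refine le_sup'_rowSum_of_vecMul_eq_smul hx₀ hx ?_
  rw [← mulVec_transpose, transpose_aeval, G.isSymm_adjMatrix]
  exact aeval_mulVec_of_mulVec_eq_smul hAx f
end

section
/- Let G be a finite simple graph with n vertices and m edges and spectral radius ρ. Then ρ − 2m/n ≤ 1 + √(s(G)/2), where s(G) is the degree deviation of G. -/
open Finset Matrix

/-!
Weight each vertex by `p v = d(v) + c` with `c = 1 + √(s/2)`. The deviations `d(u) - d̄` from the
average degree `d̄ = 2m/n` sum to zero, so over any set of vertices they sum to at most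
`s/2 ≤ c²`; hence `∑_{u ~ v} p u ≤ c² + (d̄ + c) d(v) ≤ (d̄ + c) p v`. A positive vector that the
nonnegative matrix `A` scales by at most `d̄ + c` bounds every eigenvalue of `A` by `d̄ + c`.
-/

theorem Finset.sum_le_half_sum_abs_of_sum_eq_zero {ι : Type*} {s t : Finset ι} {f : ι → ℝ}
    (hst : s ⊆ t) (hf : ∑ i ∈ t, f i = 0) : ∑ i ∈ s, f i ≤ (∑ i ∈ t, |f i|) / 2 :=
  calc ∑ i ∈ s, f i ≤ ∑ i ∈ s, (f i)⁺ := sum_le_sum fun i _ => le_posPart (f i)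
    _ ≤ ∑ i ∈ t, (f i)⁺ := sum_le_sum_of_subset_of_nonneg hst fun i _ _ => posPart_nonneg _
    _ = (∑ i ∈ t, |f i| + ∑ i ∈ t, f i) / 2 := by
        rw [← sum_add_distrib, sum_div]
        refine sum_congr rfl fun i _ => ?_
        rw [abs_add_eq_two_nsmul_posPart, two_nsmul]
        ring
    _ = (∑ i ∈ t, |f i|) / 2 := by rw [hf, add_zero]

theorem Matrix.abs_le_of_mulVec_le_smul {V : Type*} [Fintype V] {A : Matrix V V ℝ}
    (hA : ∀ i j, 0 ≤ A i j) {p : V → ℝ} (hp : ∀ i, 0 < p i) {C : ℝ} (hC : A *ᵥ p ≤ C • p)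
    {μ : ℝ} {x : V → ℝ} (hx : x ≠ 0) (hμ : A *ᵥ x = μ • x) : |μ| ≤ C := by
  obtain ⟨i₀, hi₀⟩ := Function.ne_iff.mp hx
  have : Nonempty V := ⟨i₀⟩
  obtain ⟨v, -, hv⟩ := exists_max_image univ (fun i => |x i| / p i) univ_nonempty
  set r := |x v| / p v
  have hx_le : ∀ i, |x i| ≤ r * p i := fun i =>
    (div_le_iff₀ (hp i)).mp (hv i (mem_univ i))
  have hr : 0 < r := (div_pos (abs_pos.mpr hi₀) (hp i₀)).trans_le (hv i₀ (mem_univ i₀))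
  have hxv : |x v| = r * p v := (div_mul_cancel₀ _ (hp v).ne').symm
  have key : |μ| * (r * p v) ≤ C * (r * p v) :=
    calc |μ| * (r * p v) = |(A *ᵥ x) v| := by
          rw [hμ, Pi.smul_apply, smul_eq_mul, abs_mul, hxv]
      _ ≤ ∑ j, A v j * |x j| := by
          simp only [mulVec, dotProduct]
          refine (abs_sum_le_sum_abs _ _).trans_eq (sum_congr rfl fun j _ => ?_)
          rw [abs_mul, abs_of_nonneg (hA v j)]
      _ ≤ ∑ j, A v j * (r * p j) :=
          sum_le_sum fun j _ => mul_le_mul_of_nonneg_left (hx_le j) (hA v j)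
      _ = r * (A *ᵥ p) v := by
          simp only [mulVec, dotProduct, mul_sum]
          exact sum_congr rfl fun j _ => by ring
      _ ≤ r * (C * p v) := mul_le_mul_of_nonneg_left (hC v) hr.le
      _ = C * (r * p v) := by ring
  exact le_of_mul_le_mul_right key (mul_pos hr (hp v))

namespace SimpleGraph

variable {V : Type*} [Fintype V] (G : SimpleGraph V) [DecidableRel G.Adj]

theorem sum_degree_sub_avgDegree_eq_zero :
    ∑ v, ((G.degree v : ℝ) - 2 * (G.edgeFinset.card : ℝ) / (Fintype.card V : ℝ)) = 0 := by
  rcases isEmpty_or_nonempty V with _ | _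
  · simp
  have hn : (Fintype.card V : ℝ) ≠ 0 := Nat.cast_ne_zero.mpr Fintype.card_ne_zero
  rw [sum_sub_distrib, sum_const, card_univ, nsmul_eq_mul, mul_div_cancel₀ _ hn,
    ← Nat.cast_sum, sum_degrees_eq_twice_card_edges]
  push_cast
  ring

variable [DecidableEq V]

theorem spectralRadius_le_of_sum_neighborFinset_le [Nonempty V] {p : V → ℝ} (hp : ∀ v, 0 < p v)
    {C : ℝ} (hC : ∀ v, ∑ u ∈ G.neighborFinset v, p u ≤ C * p v) : G.spectralRadius ≤ C := by
  refine ciSup_le fun i => ?_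
  have hA := G.isHermitian_adjMatrix'
  have hx : ⇑(hA.eigenvectorBasis i) ≠ 0 := fun h =>
    hA.eigenvectorBasis.orthonormal.ne_zero i (by ext u; exact congrFun h u)
  refine (le_abs_self _).trans (abs_le_of_mulVec_le_smul (fun _ _ => ?_) hp (fun v => ?_) hx
    (hA.mulVec_eigenvectorBasis i))
  · rw [adjMatrix_apply]; split_ifs <;> norm_num
  · simpa only [adjMatrix_mulVec_apply, Pi.smul_apply, smul_eq_mul] using hC v

theorem sum_neighborFinset_degree_sub_avgDegree_le (v : V) :
    ∑ u ∈ G.neighborFinset v,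
        ((G.degree u : ℝ) - 2 * (G.edgeFinset.card : ℝ) / (Fintype.card V : ℝ)) ≤
      G.degreeDeviation / 2 :=
  sum_le_half_sum_abs_of_sum_eq_zero (subset_univ _) G.sum_degree_sub_avgDegree_eq_zero

theorem sum_neighborFinset_degree_add_le {c : ℝ} (hc : 0 ≤ c) (hsc : G.degreeDeviation / 2 ≤ c ^ 2)
    (v : V) :
    ∑ u ∈ G.neighborFinset v, ((G.degree u : ℝ) + c) ≤
      (2 * (G.edgeFinset.card : ℝ) / (Fintype.card V : ℝ) + c) * (G.degree v + c) := by
  set d := 2 * (G.edgeFinset.card : ℝ) / (Fintype.card V : ℝ)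
  have hd : 0 ≤ d := by positivity
  have hsplit : ∑ u ∈ G.neighborFinset v, ((G.degree u : ℝ) + c) =
      ∑ u ∈ G.neighborFinset v, ((G.degree u : ℝ) - d) + (d + c) * G.degree v := by
    rw [← card_neighborFinset_eq_degree, sum_add_distrib, sum_sub_distrib, sum_const,
      sum_const, nsmul_eq_mul, nsmul_eq_mul]
    ring
  rw [hsplit]
  nlinarith [G.sum_neighborFinset_degree_sub_avgDegree_le v]

theorem spectralRadius_le_avgDegree_add [Nonempty V] {c : ℝ} (hc : 0 < c)
    (hsc : G.degreeDeviation / 2 ≤ c ^ 2) :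
    G.spectralRadius ≤ 2 * (G.edgeFinset.card : ℝ) / (Fintype.card V : ℝ) + c :=
  G.spectralRadius_le_of_sum_neighborFinset_le (fun v => by positivity)
    (G.sum_neighborFinset_degree_add_le hc.le hsc)

end SimpleGraph

/-- `ρ(G) - 2m/n ≤ 1 + √(s(G)/2)`. -/
theorem spectralRadius_sub_avgDegree_le_one_add_sqrt
    {V : Type*} [Fintype V] [DecidableEq V] [Nonempty V]
    (G : SimpleGraph V) [DecidableRel G.Adj] :
    G.spectralRadius - 2 * (G.edgeFinset.card : ℝ) / (Fintype.card V : ℝ) ≤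
      1 + Real.sqrt (G.degreeDeviation / 2) := by
  have hs : 0 ≤ G.degreeDeviation / 2 :=
    div_nonneg (sum_nonneg fun _ _ => abs_nonneg _) zero_le_two
  have hsc : G.degreeDeviation / 2 ≤ (1 + Real.sqrt (G.degreeDeviation / 2)) ^ 2 := by
    nlinarith [Real.sq_sqrt hs, Real.sqrt_nonneg (G.degreeDeviation / 2)]
  have := G.spectralRadius_le_avgDegree_add (by positivity) hsc
  linarith
end

section
/- For n ≥ 2, let S_n denote the star graph on n vertices (one center joined to n−1 leaves), which has m = n−1 edges and spectral radius ρ(S_n) = √(n−1). Then the ratio (ρ(S_n) − 2(n−1)/n) / √(s(S_n)) tends to √(1/2) as n → ∞, where s(S_n) is the degree deviation of S_n. In particular, the constant 1/2 in the bound ρ(G) − 2m/n ≤ √(s(G)/2) is best possible. -/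
open Finset Matrix

/-- The star graph on `n` vertices: one center joined to `n - 1` leaves,
realized as the complete bipartite graph `K_{1,n-1}`. -/
def starGraph (n : ℕ) : SimpleGraph (Fin 1 ⊕ Fin (n - 1)) :=
  completeBipartiteGraph (Fin 1) (Fin (n - 1))

instance (n : ℕ) : DecidableRel (starGraph n).Adj := fun x y =>
  inferInstanceAs (Decidable (x.isLeft ∧ y.isRight ∨ x.isRight ∧ y.isLeft))

/-! The star `S_n` is the complete bipartite graph `K_{1,n-1}`. On `K_{a,b}`, summing the
eigenvector equation over each side forces `μ² = ab` or `μ = 0`, while `(√b, √a)` is an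
eigenvector for `√(ab)`; so `ρ(K_{a,b}) = √(ab)`, and a direct count gives
`s(K_{a,b}) = 2ab|a - b|/(a + b)`. For the star the ratio is therefore
`(√(n-1) - 2(n-1)/n) / √(2(n-1)(n-2)/n)`, which tends to `1/√2`. -/

namespace Matrix

variable {n R : Type*} [Fintype n] [DecidableEq n] [Field R]

theorem mem_spectrum_of_mulVec_eq_smul {A : Matrix n n R} {μ : R} {v : n → R} (hv : v ≠ 0)
    (hAv : A *ᵥ v = μ • v) : μ ∈ spectrum R A := by
  rw [← spectrum_toLin', ← Module.End.hasEigenvalue_iff_mem_spectrum]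
  exact Module.End.hasEigenvalue_of_hasEigenvector
    ⟨Module.End.mem_eigenspace_iff.mpr (by rwa [toLin'_apply]), hv⟩

end Matrix

namespace SimpleGraph

theorem spectralRadius_eq_of_mulVec_eq_smul {V : Type*} [Fintype V] [DecidableEq V]
    (G : SimpleGraph V) [DecidableRel G.Adj] {r : ℝ}
    (hle : ∀ (μ : ℝ) (v : V → ℝ), v ≠ 0 → G.adjMatrix ℝ *ᵥ v = μ • v → μ ≤ r)
    {v : V → ℝ} (hv : v ≠ 0) (hr : G.adjMatrix ℝ *ᵥ v = r • v) :
    G.spectralRadius = r := by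
  set hA := G.isHermitian_adjMatrix'
  obtain ⟨i, hi⟩ : r ∈ Set.range hA.eigenvalues := by
    rw [← hA.spectrum_real_eq_range_eigenvalues]
    exact mem_spectrum_of_mulVec_eq_smul hv hr
  have : Nonempty V := ⟨i⟩
  refine le_antisymm (ciSup_le fun j => hle _ _ ?_ (hA.mulVec_eigenvectorBasis j)) ?_
  · simpa using hA.eigenvectorBasis.orthonormal.ne_zero j
  · exact hi ▸ le_ciSup (Set.finite_range _).bddAbove i

section CompleteBipartite

variable {α β : Type*} [Fintype α] [Fintype β] [DecidableRel (completeBipartiteGraph α β).Adj]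

theorem completeBipartiteGraph_degree_inl (a : α) :
    (completeBipartiteGraph α β).degree (Sum.inl a) = Fintype.card β := by
  have : (completeBipartiteGraph α β).neighborFinset (Sum.inl a) = univ.map .inr := by
    ext (_ | _) <;> simp
  rw [← card_neighborFinset_eq_degree, this, card_map, card_univ]

theorem completeBipartiteGraph_degree_inr (b : β) :
    (completeBipartiteGraph α β).degree (Sum.inr b) = Fintype.card α := by
  have : (completeBipartiteGraph α β).neighborFinset (Sum.inr b) = univ.map .inl := by
    ext (_ | _) <;> simp
  rw [← card_neighborFinset_eq_degree, this, card_map, card_univ]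

theorem card_edgeFinset_completeBipartiteGraph [DecidableEq α] [DecidableEq β] :
    #(completeBipartiteGraph α β).edgeFinset = Fintype.card α * Fintype.card β := by
  have := (completeBipartiteGraph α β).sum_degrees_eq_twice_card_edges
  simp only [Fintype.sum_sum_type, completeBipartiteGraph_degree_inl,
    completeBipartiteGraph_degree_inr, sum_const, card_univ, smul_eq_mul] at this
  linarith

variable {R : Type*}

theorem completeBipartiteGraph_adjMatrix_mulVec_inl [NonAssocSemiring R] (v : α ⊕ β → R)
    (a : α) :
    ((completeBipartiteGraph α β).adjMatrix R *ᵥ v) (Sum.inl a) = ∑ b, v (Sum.inr b) := by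
  simp [mulVec, dotProduct, Fintype.sum_sum_type]

theorem completeBipartiteGraph_adjMatrix_mulVec_inr [NonAssocSemiring R] (v : α ⊕ β → R)
    (b : β) :
    ((completeBipartiteGraph α β).adjMatrix R *ᵥ v) (Sum.inr b) = ∑ a, v (Sum.inl a) := by
  simp [mulVec, dotProduct, Fintype.sum_sum_type]

theorem completeBipartiteGraph_eigenvalue_sq [Field R] {μ : R} {v : α ⊕ β → R} (hv : v ≠ 0)
    (hAv : (completeBipartiteGraph α β).adjMatrix R *ᵥ v = μ • v) :
    μ ^ 2 = Fintype.card α * Fintype.card β ∨ μ = 0 := by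
  have hl (a : α) : μ * v (Sum.inl a) = ∑ b, v (Sum.inr b) := by
    rw [← completeBipartiteGraph_adjMatrix_mulVec_inl, hAv, Pi.smul_apply, smul_eq_mul]
  have hr (b : β) : μ * v (Sum.inr b) = ∑ a, v (Sum.inl a) := by
    rw [← completeBipartiteGraph_adjMatrix_mulVec_inr, hAv, Pi.smul_apply, smul_eq_mul]
  generalize hL : ∑ a, v (Sum.inl a) = L at hr
  generalize hM : ∑ b, v (Sum.inr b) = M at hl
  have hμL : μ * L = Fintype.card α * M := by simp [← hL, mul_sum, hl]
  have hμM : μ * M = Fintype.card β * L := by simp [← hM, mul_sum, hr]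
  by_contra! h
  have hL0 : L = 0 := by
    refine (mul_eq_zero.mp ?_).resolve_left (sub_ne_zero.mpr h.1)
    linear_combination μ * hμL + (Fintype.card α : R) * hμM
  have hM0 : M = 0 := by
    refine (mul_eq_zero.mp ?_).resolve_left (sub_ne_zero.mpr h.1)
    linear_combination μ * hμM + (Fintype.card β : R) * hμL
  refine hv (funext ?_)
  rintro (a | b)
  · simpa [hM0, h.2] using hl a
  · simpa [hL0, h.2] using hr b

theorem spectralRadius_completeBipartiteGraph [DecidableEq α] [DecidableEq β] [Nonempty α]
    [Nonempty β] : (completeBipartiteGraph α β).spectralRadius =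
      √(Fintype.card α * Fintype.card β) := by
  have ha : 0 < (Fintype.card α : ℝ) := Nat.cast_pos.mpr Fintype.card_pos
  have hb : 0 < (Fintype.card β : ℝ) := Nat.cast_pos.mpr Fintype.card_pos
  refine spectralRadius_eq_of_mulVec_eq_smul _ (fun μ v hv hAv => ?_)
    (v := Sum.elim (fun _ => √(Fintype.card β)) (fun _ => √(Fintype.card α))) ?_ ?_
  · rcases completeBipartiteGraph_eigenvalue_sq hv hAv with h | rfl
    · exact (le_abs_self μ).trans_eq (by rw [← Real.sqrt_sq_eq_abs, h])
    · positivity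
  · intro h
    have := congrFun h (Sum.inl (Classical.arbitrary α))
    simp only [Sum.elim_inl, Pi.zero_apply] at this
    exact (Real.sqrt_pos.mpr hb).ne' this
  · ext (_ | _) <;>
    simp only [completeBipartiteGraph_adjMatrix_mulVec_inl,
      completeBipartiteGraph_adjMatrix_mulVec_inr, Sum.elim_inl, Sum.elim_inr, Pi.smul_apply,
      smul_eq_mul, sum_const, card_univ, nsmul_eq_mul, Real.sqrt_mul ha.le]
    · rw [mul_assoc, Real.mul_self_sqrt hb.le, mul_comm]
    · rw [mul_right_comm, Real.mul_self_sqrt ha.le, mul_comm]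

theorem degreeDeviation_completeBipartiteGraph [DecidableEq α] [DecidableEq β] :
    (completeBipartiteGraph α β).degreeDeviation =
      2 * Fintype.card α * Fintype.card β * |(Fintype.card α - Fintype.card β : ℝ)| /
        (Fintype.card α + Fintype.card β) := by
  rw [degreeDeviation, Fintype.sum_sum_type]
  simp only [completeBipartiteGraph_degree_inl, completeBipartiteGraph_degree_inr,
    card_edgeFinset_completeBipartiteGraph, Fintype.card_sum, sum_const, card_univ, nsmul_eq_mul]
  push_cast
  have ha : (0 : ℝ) ≤ Fintype.card α := Nat.cast_nonneg _
  have hb : (0 : ℝ) ≤ Fintype.card β := Nat.cast_nonneg _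
  generalize (Fintype.card α : ℝ) = a, (Fintype.card β : ℝ) = b at ha hb ⊢
  rcases (add_nonneg ha hb).eq_or_lt with hab | hab
  · obtain rfl : a = 0 := by linarith
    obtain rfl : b = 0 := by linarith
    simp
  have hb' : b - 2 * (a * b) / (a + b) = b * (b - a) / (a + b) := by field_simp; ring
  have ha' : a - 2 * (a * b) / (a + b) = a * (a - b) / (a + b) := by field_simp; ring
  rw [hb', ha', abs_div, abs_div, abs_mul, abs_mul, abs_of_nonneg ha, abs_of_nonneg hb,
    abs_of_pos hab, abs_sub_comm b a]
  ring

end CompleteBipartite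

end SimpleGraph

open Filter Topology

theorem tendsto_star_ratio_atTop :
    Tendsto (fun x : ℝ => (√(x - 1) - 2 * (x - 1) / x) / √(2 * (x - 1) * (x - 2) / x))
      atTop (𝓝 √(1 / 2)) := by
  -- substituting `t = 1 / x` and cancelling `√(x - 1)` leaves a function continuous at `t = 0`
  set f : ℝ → ℝ := fun t => (1 - 2 * √(t - t ^ 2)) / √(2 * (1 - 2 * t))
  have hf : ContinuousAt f 0 := by fun_prop (disch := norm_num)
  have hf0 : f 0 = √(1 / 2) := by simp [f, Real.sqrt_inv]
  have hsub : ∀ x : ℝ, 1 < x →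
      (√(x - 1) - 2 * (x - 1) / x) / √(2 * (x - 1) * (x - 2) / x) = f x⁻¹ := by
    intro x hx
    have hx0 : 0 < x := by linarith
    have hx1 : 0 ≤ x - 1 := by linarith
    have hs : √(x⁻¹ - x⁻¹ ^ 2) = √(x - 1) / x := by
      rw [show x⁻¹ - x⁻¹ ^ 2 = (x - 1) / x ^ 2 by field_simp, Real.sqrt_div hx1,
        Real.sqrt_sq hx0.le]
    have hd : 2 * (x - 1) * (x - 2) / x = (x - 1) * (2 * (1 - 2 * x⁻¹)) := by field_simp
    have hn : √(x - 1) - 2 * (x - 1) / x = √(x - 1) * (1 - 2 * (√(x - 1) / x)) := by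
      linear_combination (2 / x) * Real.mul_self_sqrt hx1
    rw [hd, Real.sqrt_mul hx1, hn, mul_div_mul_left _ _ (Real.sqrt_pos.mpr (by linarith)).ne']
    simp only [f, hs]
  rw [← hf0]
  refine (hf.tendsto.comp tendsto_inv_atTop_zero).congr' ?_
  filter_upwards [eventually_gt_atTop 1] with x hx
  exact (hsub x hx).symm

-- The same term as the instance on `starGraph n`, so that the lemmas on `K_{a,b}` apply to stars.
instance {α β : Type*} : DecidableRel (completeBipartiteGraph α β).Adj := fun v w =>
  inferInstanceAs (Decidable (v.isLeft ∧ w.isRight ∨ v.isRight ∧ w.isLeft))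

section StarGraph

variable {n : ℕ}

theorem card_edgeFinset_starGraph : #(starGraph n).edgeFinset = n - 1 :=
  (SimpleGraph.card_edgeFinset_completeBipartiteGraph).trans (by simp)

theorem spectralRadius_starGraph (hn : 2 ≤ n) : (starGraph n).spectralRadius = √(n - 1) := by
  have : Nonempty (Fin (n - 1)) := ⟨⟨0, by omega⟩⟩
  refine SimpleGraph.spectralRadius_completeBipartiteGraph.trans ?_
  simp [Nat.cast_sub (by omega : 1 ≤ n)]

theorem degreeDeviation_starGraph (hn : 2 ≤ n) :
    (starGraph n).degreeDeviation = 2 * (n - 1) * (n - 2) / n := by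
  refine SimpleGraph.degreeDeviation_completeBipartiteGraph.trans ?_
  have : ((n - 1 : ℕ) : ℝ) = n - 1 := by rw [Nat.cast_sub (by omega)]; simp
  have h2 : (2 : ℝ) ≤ n := by exact_mod_cast hn
  rw [Fintype.card_fin, Fintype.card_fin, Nat.cast_one, this, abs_of_nonpos (by linarith)]
  ring

end StarGraph

/-- The star graph `S_n` has `n - 1` edges and spectral radius `√(n-1)`, and the ratio
`(ρ(S_n) - 2(n-1)/n) / √(s(S_n))` tends to `√(1/2)` as `n → ∞`; hence the constant `1/2`
in the bound `ρ(G) - 2m/n ≤ √(s(G)/2)` is best possible. -/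
theorem star_ratio_tendsto_sqrt_half :
    (∀ n : ℕ, 2 ≤ n →
      (starGraph n).edgeFinset.card = n - 1 ∧
      (starGraph n).spectralRadius = Real.sqrt ((n : ℝ) - 1)) ∧
    Filter.Tendsto
      (fun n : ℕ =>
        ((starGraph n).spectralRadius - 2 * ((n : ℝ) - 1) / (n : ℝ)) /
          Real.sqrt ((starGraph n).degreeDeviation))
      Filter.atTop (nhds (Real.sqrt (1 / 2))) := by
  refine ⟨fun n hn => ⟨card_edgeFinset_starGraph, spectralRadius_starGraph hn⟩, ?_⟩
  refine (tendsto_star_ratio_atTop.comp tendsto_natCast_atTop_atTop).congr' ?_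
  filter_upwards [eventually_ge_atTop 2] with n hn
  rw [Function.comp_apply, spectralRadius_starGraph hn, degreeDeviation_starGraph hn]
end
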